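/- arXiv:1606.02224 — 2 statements merged into one kernel-verified Lean document; each statement's English description precedes it below -/
import Mathlib

section
/- Let A ∈ ℝ^{n×n}, B ∈ ℝ^{n×m}, K ∈ ℝ^{m×n}, and let Q ∈ ℝ^{n×n}, R ∈ ℝ^{m×m}, P ∈ ℝ^{n×n} be symmetric positive semidefinite. Let X_f ⊆ ℝ^n satisfy: for every x ∈ X_f, (A+BK)x ∈ X_f and ‖(A+BK)x‖²_P − ‖x‖²_P + ‖x‖²_Q + ‖Kx‖²_R ≤ 0. Given inputs u_0,…,u_{N−1} ∈ ℝ^m with states x_0,…,x_N defined by x_{k+1} = A x_k + B u_k and x_N ∈ X_f, define J(x_0, u) = ∑_{k=0}^{N−1}(‖x_k‖²_Q + ‖u_k‖²_R) + ‖x_N‖²_P, and let û = (u_1,…,u_{N−1}, K x_N) be the shifted candidate starting at x_1. Then J(x_1, û) ≤ J(x_0, u) − ‖x_0‖²_Q − ‖u_0‖²_R. -/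
/-!
Splitting off the first stage of `J(x₀, u)` leaves exactly the cost of the shifted inputs
`(u₁, …)` from `x₁`. The candidate `û` agrees with these on the first `N - 1` stages and only
replaces the terminal cost `‖x_N‖²_P` by one extra stage under `K`; the terminal Lyapunov
condition says precisely that this replacement does not increase the cost.
-/

open Matrix

/-- State trajectory of the discrete-time linear system `x(k+1) = A x(k) + B u(k)`. -/
def traj {n m : ℕ} (A : Matrix (Fin n) (Fin n) ℝ) (B : Matrix (Fin n) (Fin m) ℝ)
    (x0 : Fin n → ℝ) (u : ℕ → Fin m → ℝ) : ℕ → Fin n → ℝ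
  | 0 => x0
  | k + 1 => A.mulVec (traj A B x0 u k) + B.mulVec (u k)

/-- Quadratic form `‖x‖²_P = xᵀ P x`. -/
def quadForm {d : ℕ} (P : Matrix (Fin d) (Fin d) ℝ) (x : Fin d → ℝ) : ℝ :=
  dotProduct x (P.mulVec x)

/-- The MPC cost of horizon `N` starting at `x0` under inputs `u`. -/
def mpcCost {n m : ℕ} (A : Matrix (Fin n) (Fin n) ℝ) (B : Matrix (Fin n) (Fin m) ℝ)
    (Q : Matrix (Fin n) (Fin n) ℝ) (R : Matrix (Fin m) (Fin m) ℝ)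
    (P : Matrix (Fin n) (Fin n) ℝ) (N : ℕ) (x0 : Fin n → ℝ) (u : ℕ → Fin m → ℝ) : ℝ :=
  (∑ k ∈ Finset.range N, (quadForm Q (traj A B x0 u k) + quadForm R (u k))) +
    quadForm P (traj A B x0 u N)

section Trajectory

variable {n m : ℕ} (A : Matrix (Fin n) (Fin n) ℝ) (B : Matrix (Fin n) (Fin m) ℝ)

theorem traj_congr (x : Fin n → ℝ) {v w : ℕ → Fin m → ℝ} {k : ℕ}
    (h : ∀ j < k, v j = w j) : traj A B x v k = traj A B x w k := by
  induction k with
  | zero => rfl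
  | succ k ih =>
    simp only [traj]
    rw [ih fun j hj => h j (by omega), h k k.lt_succ_self]

theorem traj_succ_eq_traj_shift (x0 : Fin n → ℝ) (u : ℕ → Fin m → ℝ) (k : ℕ) :
    traj A B x0 u (k + 1) = traj A B (traj A B x0 u 1) (fun j => u (j + 1)) k := by
  induction k with
  | zero => rfl
  | succ k ih => simp only [traj] at ih ⊢; rw [ih]

variable (Q : Matrix (Fin n) (Fin n) ℝ) (R : Matrix (Fin m) (Fin m) ℝ)
  (P : Matrix (Fin n) (Fin n) ℝ)

theorem mpcCost_congr (N : ℕ) (x : Fin n → ℝ) {v w : ℕ → Fin m → ℝ}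
    (h : ∀ j < N, v j = w j) : mpcCost A B Q R P N x v = mpcCost A B Q R P N x w := by
  unfold mpcCost
  rw [traj_congr A B x h]
  congr 1
  refine Finset.sum_congr rfl fun k hk => ?_
  have hk : k < N := Finset.mem_range.mp hk
  rw [traj_congr A B x fun j hj => h j (by omega), h k hk]

theorem mpcCost_succ_eq_stage_add_shift (N : ℕ) (x0 : Fin n → ℝ) (u : ℕ → Fin m → ℝ) :
    mpcCost A B Q R P (N + 1) x0 u = quadForm Q x0 + quadForm R (u 0) +
      mpcCost A B Q R P N (traj A B x0 u 1) (fun j => u (j + 1)) := by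
  simp only [mpcCost, Finset.sum_range_succ', ← traj_succ_eq_traj_shift A B x0 u]
  rw [traj]
  ring

theorem mpcCost_succ (N : ℕ) (x : Fin n → ℝ) (u : ℕ → Fin m → ℝ) :
    mpcCost A B Q R P (N + 1) x u = mpcCost A B Q R P N x u +
      (quadForm P (traj A B x u (N + 1)) - quadForm P (traj A B x u N) +
        quadForm Q (traj A B x u N) + quadForm R (u N)) := by
  simp only [mpcCost, Finset.sum_range_succ]
  ring

end Trajectory

theorem shifted_cost_decrease_general {n m N : ℕ} (hN : 1 ≤ N)
    (A : Matrix (Fin n) (Fin n) ℝ) (B : Matrix (Fin n) (Fin m) ℝ)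
    (K : Matrix (Fin m) (Fin n) ℝ)
    (Q P : Matrix (Fin n) (Fin n) ℝ) (R : Matrix (Fin m) (Fin m) ℝ)
    (Xf : Set (Fin n → ℝ))
    (hXf : ∀ x ∈ Xf, (A.mulVec x + B.mulVec (K.mulVec x)) ∈ Xf ∧
      quadForm P (A.mulVec x + B.mulVec (K.mulVec x)) - quadForm P x +
        quadForm Q x + quadForm R (K.mulVec x) ≤ 0)
    (x0 : Fin n → ℝ) (u : ℕ → Fin m → ℝ)
    (hterm : traj A B x0 u N ∈ Xf) :
    mpcCost A B Q R P N (traj A B x0 u 1)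
        (fun k => if k + 1 < N then u (k + 1) else K.mulVec (traj A B x0 u N)) ≤
      mpcCost A B Q R P N x0 u - quadForm Q x0 - quadForm R (u 0) := by
  obtain ⟨M, rfl⟩ := Nat.exists_eq_add_of_le' hN
  set xN := traj A B x0 u (M + 1)
  set û : ℕ → Fin m → ℝ := fun k => if k + 1 < M + 1 then u (k + 1) else K.mulVec xN
  have hû : ∀ j < M, û j = u (j + 1) := fun j hj => if_pos (by omega)
  have hûM : û M = K.mulVec xN := if_neg (by omega)
  have hxM : traj A B (traj A B x0 u 1) û M = xN := by
    rw [traj_congr A B _ hû, ← traj_succ_eq_traj_shift]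
  have hxN : traj A B (traj A B x0 u 1) û (M + 1) = A.mulVec xN + B.mulVec (K.mulVec xN) := by
    rw [traj, hxM, hûM]
  rw [mpcCost_succ, mpcCost_congr A B Q R P M _ hû, hxN, hxM, hûM,
    mpcCost_succ_eq_stage_add_shift]
  linarith [(hXf xN hterm).2]

/-- Cost decrease along the shifted candidate: under the standard terminal Lyapunov
condition on `X_f`, the shifted input sequence `(u_1, …, u_{N-1}, K x_N)` starting at
`x_1 = A x_0 + B u_0` satisfies `J(x_1, û) ≤ J(x_0, u) - ‖x_0‖²_Q - ‖u_0‖²_R`. -/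
theorem shifted_cost_decrease {n m N : ℕ} (hN : 1 ≤ N)
    (A : Matrix (Fin n) (Fin n) ℝ) (B : Matrix (Fin n) (Fin m) ℝ)
    (K : Matrix (Fin m) (Fin n) ℝ)
    (Q P : Matrix (Fin n) (Fin n) ℝ) (R : Matrix (Fin m) (Fin m) ℝ)
    (hQ : Q.PosSemidef) (hR : R.PosSemidef) (hP : P.PosSemidef)
    (Xf : Set (Fin n → ℝ))
    (hXf : ∀ x ∈ Xf, (A.mulVec x + B.mulVec (K.mulVec x)) ∈ Xf ∧
      quadForm P (A.mulVec x + B.mulVec (K.mulVec x)) - quadForm P x +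
        quadForm Q x + quadForm R (K.mulVec x) ≤ 0)
    (x0 : Fin n → ℝ) (u : ℕ → Fin m → ℝ)
    (hterm : traj A B x0 u N ∈ Xf) :
    mpcCost A B Q R P N (traj A B x0 u 1)
        (fun k => if k + 1 < N then u (k + 1) else K.mulVec (traj A B x0 u N)) ≤
      mpcCost A B Q R P N x0 u - quadForm Q x0 - quadForm R (u 0) :=
  shifted_cost_decrease_general hN A B K Q P R Xf hXf x0 u hterm
end

section
/- Let A ∈ ℝ^{n×n}, B ∈ ℝ^{n×m}, K ∈ ℝ^{m×n}, let q_e > 0 with Q_e = q_e I, and let P_e ∈ ℝ^{n×n} be symmetric positive definite satisfying ‖(A+BK)x‖²_{P_e} + ‖x‖²_{Q_e} ≤ ‖x‖²_{P_e} for all x ∈ ℝ^n. Let x^i_0,…,x^i_N and x^j_0,…,x^j_N be two trajectories of x_{k+1} = A x_k + B u_k with input sequences u^i and u^j, and define the coupling cost J_e = ∑_{k=0}^{N−1} ‖x^i_k − x^j_k‖²_{Q_e} + ‖x^i_N − x^j_N‖²_{P_e}. Let the shifted candidate trajectories start at x^i_1 and x^j_1 with inputs (u^i_1,…,u^i_{N−1},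 K x^i_N) and (u^j_1,…,u^j_{N−1}, K x^j_N). Then the coupling cost of the shifted pair satisfies J_e(shifted) ≤ J_e − ‖x^i_0 − x^j_0‖²_{Q_e}. -/
open Matrix

/-- Coupling cost between two trajectories over a horizon of length `N`:
`J_e = ∑_{k=0}^{N-1} ‖x^i_k - x^j_k‖²_{Q_e} + ‖x^i_N - x^j_N‖²_{P_e}`. -/
def couplingCost {n m : ℕ} (A : Matrix (Fin n) (Fin n) ℝ) (B : Matrix (Fin n) (Fin m) ℝ)
    (Qe Pe : Matrix (Fin n) (Fin n) ℝ) (N : ℕ)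
    (xi0 xj0 : Fin n → ℝ) (ui uj : ℕ → Fin m → ℝ) : ℝ :=
  (∑ k ∈ Finset.range N, quadForm Qe (traj A B xi0 ui k - traj A B xj0 uj k)) +
    quadForm Pe (traj A B xi0 ui N - traj A B xj0 uj N)

def trajCost {n m : ℕ} (A : Matrix (Fin n) (Fin n) ℝ) (B : Matrix (Fin n) (Fin m) ℝ)
    (Q P : Matrix (Fin n) (Fin n) ℝ) (N : ℕ) (x0 : Fin n → ℝ) (u : ℕ → Fin m → ℝ) : ℝ :=
  (∑ k ∈ Finset.range N, quadForm Q (traj A B x0 u k)) + quadForm P (traj A B x0 u N)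

/-- The candidate input for the trajectory restarted at `x_1`. -/
def shiftedInput {n m : ℕ} (A : Matrix (Fin n) (Fin n) ℝ) (B : Matrix (Fin n) (Fin m) ℝ)
    (K : Matrix (Fin m) (Fin n) ℝ) (N : ℕ) (x0 : Fin n → ℝ) (u : ℕ → Fin m → ℝ) :
    ℕ → Fin m → ℝ :=
  fun k => if k + 1 < N then u (k + 1) else K *ᵥ traj A B x0 u N

section
variable {n m : ℕ} (A : Matrix (Fin n) (Fin n) ℝ) (B : Matrix (Fin n) (Fin m) ℝ)

theorem traj_sub (x0 y0 : Fin n → ℝ) (u v : ℕ → Fin m → ℝ) (k : ℕ) :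
    traj A B (x0 - y0) (u - v) k = traj A B x0 u k - traj A B y0 v k := by
  induction k with
  | zero => rfl
  | succ k ih =>
    simp only [traj, ih, mulVec_sub, Pi.sub_apply]
    abel

theorem traj_congr_input {x0 : Fin n → ℝ} {u v : ℕ → Fin m → ℝ} {t : ℕ}
    (h : ∀ k < t, u k = v k) : traj A B x0 u t = traj A B x0 v t := by
  induction t with
  | zero => rfl
  | succ t ih =>
    simp only [traj, ih fun k hk => h k (by omega), h t t.lt_succ_self]

theorem traj_shift (x0 : Fin n → ℝ) (u : ℕ → Fin m → ℝ) (j k : ℕ) :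
    traj A B (traj A B x0 u j) (fun i => u (i + j)) k = traj A B x0 u (k + j) := by
  induction k with
  | zero => simp only [traj, zero_add]
  | succ k ih => rw [Nat.add_right_comm, traj, ih]; rfl

variable (K : Matrix (Fin m) (Fin n) ℝ) {N : ℕ} (x0 : Fin n → ℝ) (u : ℕ → Fin m → ℝ)

theorem traj_shiftedInput_of_lt {k : ℕ} (hk : k < N) :
    traj A B (traj A B x0 u 1) (shiftedInput A B K N x0 u) k = traj A B x0 u (k + 1) := by
  rw [← traj_shift A B x0 u 1 k]
  exact traj_congr_input A B fun i hi => if_pos (by omega)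

theorem traj_shiftedInput_horizon (hN : 1 ≤ N) :
    traj A B (traj A B x0 u 1) (shiftedInput A B K N x0 u) N =
      A *ᵥ traj A B x0 u N + B *ᵥ (K *ᵥ traj A B x0 u N) := by
  obtain ⟨M, rfl⟩ : ∃ M, N = M + 1 := ⟨N - 1, by omega⟩
  rw [traj, traj_shiftedInput_of_lt A B K x0 u M.lt_succ_self, shiftedInput, if_neg (lt_irrefl _)]

theorem shiftedInput_sub (y0 : Fin n → ℝ) (v : ℕ → Fin m → ℝ) :
    shiftedInput A B K N x0 u - shiftedInput A B K N y0 v =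
      shiftedInput A B K N (x0 - y0) (u - v) := by
  funext k
  simp only [shiftedInput, Pi.sub_apply, traj_sub, mulVec_sub]
  split_ifs <;> rfl

end

theorem couplingCost_eq_trajCost_sub {n m : ℕ} (A : Matrix (Fin n) (Fin n) ℝ)
    (B : Matrix (Fin n) (Fin m) ℝ) (Q P : Matrix (Fin n) (Fin n) ℝ) (N : ℕ)
    (x0 y0 : Fin n → ℝ) (u v : ℕ → Fin m → ℝ) :
    couplingCost A B Q P N x0 y0 u v = trajCost A B Q P N (x0 - y0) (u - v) := by
  simp only [couplingCost, trajCost, traj_sub]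

theorem trajCost_shifted_le {n m N : ℕ} (hN : 1 ≤ N)
    (A : Matrix (Fin n) (Fin n) ℝ) (B : Matrix (Fin n) (Fin m) ℝ) (K : Matrix (Fin m) (Fin n) ℝ)
    (Q P : Matrix (Fin n) (Fin n) ℝ)
    (hLyap : ∀ x : Fin n → ℝ, quadForm P (A *ᵥ x + B *ᵥ (K *ᵥ x)) + quadForm Q x ≤ quadForm P x)
    (x0 : Fin n → ℝ) (u : ℕ → Fin m → ℝ) :
    trajCost A B Q P N (traj A B x0 u 1) (shiftedInput A B K N x0 u) ≤
      trajCost A B Q P N x0 u - quadForm Q x0 := by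
  set x := traj A B x0 u
  have hstages : ∑ k ∈ Finset.range N, quadForm Q (x (k + 1)) =
      ∑ k ∈ Finset.range N, quadForm Q (x k) + quadForm Q (x N) - quadForm Q x0 := by
    rw [eq_sub_iff_add_eq, ← Finset.sum_range_succ, Finset.sum_range_succ']
    rfl
  have hLyapN := hLyap (x N)
  rw [trajCost, trajCost, traj_shiftedInput_horizon A B K x0 u hN,
    Finset.sum_congr rfl fun k hk =>
      congrArg (quadForm Q) (traj_shiftedInput_of_lt A B K x0 u (Finset.mem_range.mp hk)),
    hstages]
  linarith

theorem shifted_coupling_cost_decrease_general {n m N : ℕ} (hN : 1 ≤ N)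
    (A : Matrix (Fin n) (Fin n) ℝ) (B : Matrix (Fin n) (Fin m) ℝ)
    (K : Matrix (Fin m) (Fin n) ℝ)
    (Qe Pe : Matrix (Fin n) (Fin n) ℝ)
    (hLyap : ∀ x : Fin n → ℝ,
      quadForm Pe (A.mulVec x + B.mulVec (K.mulVec x)) + quadForm Qe x ≤ quadForm Pe x)
    (xi0 xj0 : Fin n → ℝ) (ui uj : ℕ → Fin m → ℝ) :
    couplingCost A B Qe Pe N (traj A B xi0 ui 1) (traj A B xj0 uj 1)
        (fun k => if k + 1 < N then ui (k + 1) else K.mulVec (traj A B xi0 ui N))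
        (fun k => if k + 1 < N then uj (k + 1) else K.mulVec (traj A B xj0 uj N)) ≤
      couplingCost A B Qe Pe N xi0 xj0 ui uj - quadForm Qe (xi0 - xj0) := by
  change couplingCost A B Qe Pe N (traj A B xi0 ui 1) (traj A B xj0 uj 1)
      (shiftedInput A B K N xi0 ui) (shiftedInput A B K N xj0 uj) ≤ _
  rw [couplingCost_eq_trajCost_sub, couplingCost_eq_trajCost_sub, shiftedInput_sub,
    ← traj_sub]
  exact trajCost_shifted_le hN A B K Qe Pe hLyap (xi0 - xj0) (ui - uj)

/-- Decrease of the coupling cost along the shifted candidate pair: if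
`‖(A+BK)x‖²_{P_e} + ‖x‖²_{Q_e} ≤ ‖x‖²_{P_e}` for all `x`, then the coupling cost of
the shifted trajectories satisfies `J_e(shifted) ≤ J_e - ‖x^i_0 - x^j_0‖²_{Q_e}`. -/
theorem shifted_coupling_cost_decrease {n m N : ℕ} (hN : 1 ≤ N)
    (A : Matrix (Fin n) (Fin n) ℝ) (B : Matrix (Fin n) (Fin m) ℝ)
    (K : Matrix (Fin m) (Fin n) ℝ)
    (qe : ℝ) (hqe : 0 < qe) (Qe Pe : Matrix (Fin n) (Fin n) ℝ)
    (hQe : Qe = qe • (1 : Matrix (Fin n) (Fin n) ℝ))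
    (hPe : Pe.PosDef)
    (hLyap : ∀ x : Fin n → ℝ,
      quadForm Pe (A.mulVec x + B.mulVec (K.mulVec x)) + quadForm Qe x ≤ quadForm Pe x)
    (xi0 xj0 : Fin n → ℝ) (ui uj : ℕ → Fin m → ℝ) :
    couplingCost A B Qe Pe N (traj A B xi0 ui 1) (traj A B xj0 uj 1)
        (fun k => if k + 1 < N then ui (k + 1) else K.mulVec (traj A B xi0 ui N))
        (fun k => if k + 1 < N then uj (k + 1) else K.mulVec (traj A B xj0 uj N)) ≤
      couplingCost A B Qe Pe N xi0 xj0 ui uj - quadForm Qe (xi0 - xj0) :=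
  shifted_coupling_cost_decrease_general hN A B K Qe Pe hLyap xi0 xj0 ui uj
end
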